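/- Let f be a smooth function on ℝ^{2l+1} and define the contact vector field X_f = f ∂_z - (1/2) ω^{rs} T_r(f) T_s (summing over r,s from 1 to 2l), where T_r = ∂_{q^r} - ω_{kr} q^k ∂_z and ω is the standard symplectic matrix. Then div(X_f) = (l+1) ∂_z f. -/

import Mathlib

open scoped BigOperators

/-- A point of ℝ^{2l+1} with Darboux coordinates (z, q^1, ..., q^{2l}),
where the 2l coordinates q are indexed by `Fin l ⊕ Fin l` ((x_1,...,x_l,y_1,...,y_l)).
The same type serves as the tangent space. -/
abbrev Pt (l : ℕ) := ℝ × ((Fin l ⊕ Fin l) → ℝ)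

/-- The standard symplectic matrix ω = [[0, id_l], [-id_l, 0]]. -/
def omg {l : ℕ} : (Fin l ⊕ Fin l) → (Fin l ⊕ Fin l) → ℝ
  | .inl i, .inr j => if i = j then 1 else 0
  | .inr i, .inl j => if i = j then -1 else 0
  | _, _ => 0

/-- The inverse matrix ω^{rs} = [[0, -id_l], [id_l, 0]]. -/
def omgInv {l : ℕ} : (Fin l ⊕ Fin l) → (Fin l ⊕ Fin l) → ℝ
  | .inl i, .inr j => if i = j then -1 else 0
  | .inr i, .inl j => if i = j then 1 else 0
  | _, _ => 0

/-- The partial derivative ∂_z. -/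
noncomputable def dz {l : ℕ} (f : Pt l → ℝ) (p : Pt l) : ℝ := fderiv ℝ f p (1, 0)

/-- The partial derivative ∂_{q^r}. -/
noncomputable def dq {l : ℕ} (r : Fin l ⊕ Fin l) (f : Pt l → ℝ) (p : Pt l) : ℝ :=
  fderiv ℝ f p (0, Pi.single r 1)

/-- The value at p of the vector field T_r = ∂_{q^r} - ω_{kr} q^k ∂_z. -/
noncomputable def Tvec {l : ℕ} (r : Fin l ⊕ Fin l) (p : Pt l) : Pt l :=
  (-(∑ k, omg k r * p.2 k), Pi.single r 1)

/-- The action of T_r on smooth functions. -/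
noncomputable def Tact {l : ℕ} (r : Fin l ⊕ Fin l) (f : Pt l → ℝ) : Pt l → ℝ :=
  fun p => fderiv ℝ f p (Tvec r p)

/-- The contact vector field X_f = f ∂_z - (1/2) ω^{rs} T_r(f) T_s of a function f. -/
noncomputable def Xvf {l : ℕ} (f : Pt l → ℝ) (p : Pt l) : Pt l :=
  ((f p, (0 : (Fin l ⊕ Fin l) → ℝ)) : Pt l)
    - (1/2 : ℝ) • ∑ r, ∑ s, (omgInv r s * Tact r f p) • Tvec s p

/-- The divergence of a vector field on ℝ^{2l+1}. -/
noncomputable def dvg {l : ℕ} (V : Pt l → Pt l) (p : Pt l) : ℝ :=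
  fderiv ℝ (fun y => (V y).1) p ((1, 0) : Pt l)
    + ∑ s, fderiv ℝ (fun y => (V y).2 s) p ((0, Pi.single s 1) : Pt l)

/-- The Lie bracket of two vector fields on ℝ^{2l+1}. -/
noncomputable def vbr {l : ℕ} (V W : Pt l → Pt l) (p : Pt l) : Pt l :=
  (fderiv ℝ (fun y => (W y).1) p (V p) - fderiv ℝ (fun y => (V y).1) p (W p),
   fun i => fderiv ℝ (fun y => (W y).2 i) p (V p) - fderiv ℝ (fun y => (V y).2 i) p (W p))

noncomputable def coeffCLM (l : ℕ) (r : Fin l ⊕ Fin l) : Pt l →L[ℝ] ℝ :=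
  ∑ k, omg k r • ((ContinuousLinearMap.proj k : (((Fin l ⊕ Fin l) → ℝ)) →L[ℝ] ℝ).comp
      (ContinuousLinearMap.snd ℝ ℝ ((Fin l ⊕ Fin l) → ℝ)))

lemma coeffCLM_apply {l : ℕ} (r : Fin l ⊕ Fin l) (v : Pt l) :
    coeffCLM l r v = ∑ k, omg k r * v.2 k := by
  simp [coeffCLM]

noncomputable def TvecD (l : ℕ) (r : Fin l ⊕ Fin l) : Pt l →L[ℝ] Pt l :=
  (-(coeffCLM l r)).prod 0

lemma TvecD_apply {l : ℕ} (r : Fin l ⊕ Fin l) (v : Pt l) :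
    TvecD l r v = (-(∑ k, omg k r * v.2 k), 0) := by
  simp [TvecD, coeffCLM_apply]

lemma hasFDerivAt_Tvec {l : ℕ} (r : Fin l ⊕ Fin l) (p : Pt l) :
    HasFDerivAt (Tvec r) (TvecD l r) p := by
  have h : (Tvec r : Pt l → Pt l)
      = fun y => ((-(coeffCLM l r y), Pi.single r 1) : Pt l) := by
    funext y; simp [Tvec, coeffCLM_apply]
  rw [h]
  exact ((coeffCLM l r).hasFDerivAt.neg).prodMk (hasFDerivAt_const _ _)

lemma omgInv_antisymm {l : ℕ} (r s : Fin l ⊕ Fin l) : omgInv s r = -omgInv r s := by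
  rcases r with r | r <;> rcases s with s | s <;> simp [omgInv, eq_comm] <;> split <;> simp

lemma sum_omgInv_symm {l : ℕ} (M : (Fin l ⊕ Fin l) → (Fin l ⊕ Fin l) → ℝ)
    (hM : ∀ r s, M r s = M s r) : ∑ r, ∑ s, omgInv r s * M r s = 0 := by
  have h : (∑ r, ∑ s, omgInv r s * M r s) = -∑ r, ∑ s, omgInv r s * M r s := by
    calc (∑ r, ∑ s, omgInv r s * M r s)
        = ∑ s, ∑ r, omgInv r s * M r s := by rw [Finset.sum_comm]
      _ = ∑ s, ∑ r, -(omgInv s r * M s r) := by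
          refine Finset.sum_congr rfl fun s _ => Finset.sum_congr rfl fun r _ => ?_
          rw [omgInv_antisymm, hM]; ring
      _ = -∑ s, ∑ r, omgInv s r * M s r := by
          simp only [Finset.sum_neg_distrib]
  linarith

lemma sum_omgInv_omg {l : ℕ} :
    ∑ r : Fin l ⊕ Fin l, ∑ s : Fin l ⊕ Fin l, omgInv r s * omg s r = 2 * (l : ℝ) := by
  simp [Fintype.sum_sum_type, omg, omgInv, Finset.sum_ite_eq, Finset.sum_ite_eq',
    mul_ite, ite_mul, eq_comm]
  ring

lemma final_algebra {l : ℕ} (Fz a : ℝ) (C b : (Fin l ⊕ Fin l) → ℝ)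
    (M : (Fin l ⊕ Fin l) → (Fin l ⊕ Fin l) → ℝ) (hM : ∀ i r, M i r = M r i) :
    Fz - 1/2 * ∑ r, ∑ s, (-(C s)) * (omgInv r s * ((-(C r)) * a + b r))
      + ∑ i, (0 - 1/2 * ∑ r, omgInv r i * (-(omg i r * Fz) + ((-(C r)) * b i + M i r)))
    = ((l : ℝ) + 1) * Fz := by
  have hP1 : (∑ r, ∑ s, omgInv r s * (C s * C r * a)) = 0 :=
    sum_omgInv_symm _ (fun r s => by ring)
  have hP24 : (∑ r, ∑ s, omgInv r s * (C s * b r)) + (∑ r, ∑ s, omgInv r s * (C r * b s)) = 0 := by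
    have h := sum_omgInv_symm (l := l) (fun r s => C s * b r + C r * b s) (fun r s => by ring)
    simpa only [mul_add, Finset.sum_add_distrib] using h
  have hP5 : (∑ r, ∑ s, omgInv r s * M s r) = 0 := sum_omgInv_symm _ (fun r s => hM s r)
  have hP3 := sum_omgInv_omg (l := l)
  have e1 : (∑ r, ∑ s, (-(C s)) * (omgInv r s * ((-(C r)) * a + b r)))
      = (∑ r, ∑ s, omgInv r s * (C s * C r * a)) - (∑ r, ∑ s, omgInv r s * (C s * b r)) := by
    rw [← Finset.sum_sub_distrib]
    refine Finset.sum_congr rfl fun r _ => ?_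
    rw [← Finset.sum_sub_distrib]
    exact Finset.sum_congr rfl fun s _ => by ring
  have step1 : ∀ i : Fin l ⊕ Fin l,
      (∑ r, omgInv r i * (-(omg i r * Fz) + ((-(C r)) * b i + M i r)))
      = ∑ r, (-(omgInv r i * omg i r * Fz) - omgInv r i * (C r * b i) + omgInv r i * M i r) :=
    fun i => Finset.sum_congr rfl fun r _ => by ring
  have e2 : (∑ i, (0 - 1/2 * ∑ r, omgInv r i * (-(omg i r * Fz) + ((-(C r)) * b i + M i r))))
      = -(1/2) * (-((∑ r : Fin l ⊕ Fin l, ∑ s : Fin l ⊕ Fin l, omgInv r s * omg s r) * Fz)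
          - (∑ r, ∑ s, omgInv r s * (C r * b s)) + (∑ r, ∑ s, omgInv r s * M s r)) := by
    calc (∑ i, (0 - 1/2 * ∑ r, omgInv r i * (-(omg i r * Fz) + ((-(C r)) * b i + M i r))))
        = ∑ i, (-(1/2) * ∑ r, (-(omgInv r i * omg i r * Fz) - omgInv r i * (C r * b i)
            + omgInv r i * M i r)) := by
          refine Finset.sum_congr rfl fun i _ => ?_
          rw [step1 i]; ring
      _ = -(1/2) * ∑ i, ∑ r, (-(omgInv r i * omg i r * Fz) - omgInv r i * (C r * b i)
            + omgInv r i * M i r) := by rw [← Finset.mul_sum]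
      _ = -(1/2) * (-((∑ r : Fin l ⊕ Fin l, ∑ s : Fin l ⊕ Fin l, omgInv r s * omg s r) * Fz)
          - (∑ r, ∑ s, omgInv r s * (C r * b s)) + (∑ r, ∑ s, omgInv r s * M s r)) := by
          congr 1
          rw [Finset.sum_comm]
          simp only [Finset.sum_add_distrib, Finset.sum_sub_distrib, Finset.sum_neg_distrib,
            Finset.sum_mul]
  rw [e1, e2, hP1, hP5, hP3]
  linear_combination (hP24) / 2
/-- for any smooth f on ℝ^{2l+1}, the contact vector field
X_f = f ∂_z - (1/2) ω^{rs} T_r(f) T_s has divergence div(X_f) = (l+1) ∂_z f. -/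
theorem div_contact_vector_field (l : ℕ) (f : Pt l → ℝ) (hf : ContDiff ℝ (⊤ : ℕ∞) f) (p : Pt l) :
    dvg (Xvf f) p = ((l : ℝ) + 1) * dz f p := by
  have hfd : Differentiable ℝ f := hf.differentiable (by simp)
  have hF : ∀ y, HasFDerivAt f (fderiv ℝ f y) y := fun y => (hfd y).hasFDerivAt
  have hFdiff : Differentiable ℝ (fderiv ℝ f) :=
    (hf.fderiv_right (m := 1) (WithTop.coe_le_coe.mpr le_top)).differentiable one_ne_zero
  have hD2 : HasFDerivAt (fderiv ℝ f) (fderiv ℝ (fderiv ℝ f) p) p := (hFdiff p).hasFDerivAt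
  set D2 := fderiv ℝ (fderiv ℝ f) p with hD2def
  set F : Pt l →L[ℝ] ℝ := fderiv ℝ f p with hFdef
  have hsymm : ∀ v w, D2 v w = D2 w v := second_derivative_symmetric hF hD2
  have hTact : ∀ r : Fin l ⊕ Fin l, HasFDerivAt (Tact r f)
      (F.comp (TvecD l r) + D2.flip (Tvec r p)) p := by
    intro r
    exact hD2.clm_apply (hasFDerivAt_Tvec r p)
  have hc1 : (fun y => (Xvf f y).1) = fun y =>
      f y - (1/2 : ℝ) * ∑ r, ∑ s, (omgInv r s * Tact r f y) * (Tvec s y).1 := by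
    funext y
    simp only [Xvf, Prod.fst_sub, Prod.fst_sum, Prod.smul_fst, smul_eq_mul]
  have hd1 : HasFDerivAt (fun y => (Xvf f y).1)
      (F - (1/2 : ℝ) • ∑ r, ∑ s,
        ((omgInv r s * Tact r f p) •
            ((ContinuousLinearMap.fst ℝ ℝ ((Fin l ⊕ Fin l) → ℝ)).comp (TvecD l s))
          + (Tvec s p).1 • (omgInv r s • (F.comp (TvecD l r) + D2.flip (Tvec r p))))) p := by
    rw [hc1]
    exact (hfd p).hasFDerivAt.sub
      (HasFDerivAt.const_mul
        (HasFDerivAt.fun_sum fun r _ => HasFDerivAt.fun_sum fun s _ =>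
          ((hTact r).const_mul (omgInv r s)).fun_mul ((hasFDerivAt_Tvec s p).fst)) (1/2))
  have hc2 : ∀ i, (fun y => (Xvf f y).2 i) = fun y =>
      (0:ℝ) - (1/2 : ℝ) * ∑ r, ∑ s, (omgInv r s * Tact r f y) *
        ((Pi.single s 1 : (Fin l ⊕ Fin l) → ℝ) i) := by
    intro i
    funext y
    simp only [Xvf, Prod.snd_sub, Prod.snd_sum, Prod.smul_snd, Pi.sub_apply,
      Finset.sum_apply, Pi.smul_apply, smul_eq_mul, Tvec, Pi.zero_apply]
  have hd2 : ∀ i, HasFDerivAt (fun y => (Xvf f y).2 i)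
      ((0 : Pt l →L[ℝ] ℝ) - (1/2 : ℝ) • ∑ r, ∑ s,
        ((Pi.single s 1 : (Fin l ⊕ Fin l) → ℝ) i) • (omgInv r s • (F.comp (TvecD l r) + D2.flip (Tvec r p)))) p := by
    intro i
    rw [hc2 i]
    exact (hasFDerivAt_const _ _).sub
      (HasFDerivAt.const_mul
        (HasFDerivAt.fun_sum fun r _ => HasFDerivAt.fun_sum fun s _ =>
          ((hTact r).const_mul (omgInv r s)).mul_const _) (1/2))
  have hfd2 : ∀ i, fderiv ℝ (fun y => (Xvf f y).2 i) p
      = (0 - (1/2 : ℝ) • ∑ r, ∑ s,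
          ((Pi.single s 1 : (Fin l ⊕ Fin l) → ℝ) i) •
            (omgInv r s • (F.comp (TvecD l r) + D2.flip (Tvec r p)))) :=
    fun i => (hd2 i).fderiv
  rw [dvg, hd1.fderiv]
  simp only [hfd2]
  simp only [ContinuousLinearMap.sub_apply, ContinuousLinearMap.smul_apply,
    ContinuousLinearMap.coe_sum', Finset.sum_apply, ContinuousLinearMap.add_apply,
    ContinuousLinearMap.coe_comp', Function.comp_apply, ContinuousLinearMap.flip_apply,
    ContinuousLinearMap.coe_fst', ContinuousLinearMap.zero_apply, TvecD_apply,
    smul_eq_mul, Pi.zero_apply, mul_zero, Finset.sum_const_zero, neg_zero, zero_mul,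
    Prod.mk_zero_zero, map_zero, zero_add, add_zero, Pi.single_apply, mul_ite, ite_mul,
    mul_one, one_mul, Finset.sum_ite_eq, Finset.sum_ite_eq', Finset.mem_univ, if_true]
  simp only [Prod.fst_zero, mul_zero, zero_add]
  have hdz : dz f p = F ((1, 0) : Pt l) := rfl
  have hsplit : ∀ (v : Pt l) (r : Fin l ⊕ Fin l),
      D2 v (Tvec r p) = -(∑ k, omg k r * p.2 k) * D2 v ((1, 0) : Pt l)
        + D2 v ((0, Pi.single r 1) : Pt l) := by
    intro v r
    have h1 : (Tvec r p)
        = (-(∑ k, omg k r * p.2 k)) • ((1, 0) : Pt l) + ((0, Pi.single r 1) : Pt l) := by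
      simp [Tvec, Prod.ext_iff]
    rw [h1, map_add, map_smul, smul_eq_mul]
  have hFneg : ∀ c : ℝ, F ((-c, 0) : Pt l) = -(c * F ((1, 0) : Pt l)) := by
    intro c
    have h := F.map_smul (-c) ((1, 0) : Pt l)
    simpa [Prod.smul_mk] using h
  have hbsym : ∀ i : Fin l ⊕ Fin l,
      D2 ((0, Pi.single i 1) : Pt l) ((1, 0) : Pt l)
        = D2 ((1, 0) : Pt l) ((0, Pi.single i 1) : Pt l) := fun i => hsymm _ _
  have hTv1 : ∀ s : Fin l ⊕ Fin l, (Tvec s p).1 = -(∑ k, omg k s * p.2 k) := fun s => rfl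
  rw [hdz]
  simp only [hsplit, hFneg, hbsym, hTv1]
  exact final_algebra (F ((1, 0) : Pt l)) (D2 ((1, 0) : Pt l) ((1, 0) : Pt l))
    (fun s => ∑ k, omg k s * p.2 k)
    (fun i => D2 ((1, 0) : Pt l) ((0, Pi.single i 1) : Pt l))
    (fun i r => D2 ((0, Pi.single i 1) : Pt l) ((0, Pi.single r 1) : Pt l))
    (fun i r => hsymm _ _)
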